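/- Let G be a cograph that is in-partitionable and such that every proper induced subgraph of G is partitionable. If G has a universal vertex v such that the graph G \ v obtained by deleting v is connected, then G contains one of the following graphs as an induced subgraph: H1 = 2K1 ⊕ 2K1 ⊕ 2K1 ⊕ K1, H2 = P3 ⊕ K1 ⊕ 2K2, H4 = P3 ⊕ (K2 ∪ P3), H5 = (K2 ∪ K1) ⊕ K1 ⊕ 2K2, H13 = K2 ⊕ (P3 ∪ 2K3), H14 = K2 ⊕ (K3 ∪ (P3 ⊕ K1)), H15 = K2 ⊕ (K3 ∪ (K1 ⊕ (K1 ∪ K2))), H17 = K3 ⊕ 2K3. -/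

import Mathlib

open SimpleGraph

/-- The disjoint union `G ∪ H` of two vertex-disjoint graphs. -/
def gUnion {α β : Type*} (G : SimpleGraph α) (H : SimpleGraph β) : SimpleGraph (α ⊕ β) where
  Adj x y :=
    match x, y with
    | Sum.inl a, Sum.inl b => G.Adj a b
    | Sum.inr a, Sum.inr b => H.Adj a b
    | _, _ => False
  symm := by
    constructor
    rintro (a | a) (b | b) h
    · exact G.adj_symm h
    · exact h.elim
    · exact h.elim
    · exact H.adj_symm h
  loopless := by
    constructor
    rintro (a | a) h
    · exact G.loopless.irrefl a h
    · exact H.loopless.irrefl a h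

/-- The join `G ⊕ H` of two vertex-disjoint graphs: disjoint union plus all edges across. -/
def gJoin {α β : Type*} (G : SimpleGraph α) (H : SimpleGraph β) : SimpleGraph (α ⊕ β) where
  Adj x y :=
    match x, y with
    | Sum.inl a, Sum.inl b => G.Adj a b
    | Sum.inr a, Sum.inr b => H.Adj a b
    | _, _ => True
  symm := by
    constructor
    rintro (a | a) (b | b) h
    · exact G.adj_symm h
    · trivial
    · trivial
    · exact H.adj_symm h
  loopless := by
    constructor
    rintro (a | a) h
    · exact G.loopless.irrefl a h
    · exact H.loopless.irrefl a h

/-- The complete graph `Kₙ`. -/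
def KG (n : ℕ) : SimpleGraph (Fin n) := ⊤

/-- The edgeless graph `nK₁` on `n` vertices. -/
def EG (n : ℕ) : SimpleGraph (Fin n) := ⊥

/-- `G` contains `H`, i.e. `H` is isomorphic to an induced subgraph of `G`. -/
def Contains {α β : Type*} (G : SimpleGraph α) (H : SimpleGraph β) : Prop :=
  Nonempty (H ↪g G)

/-- A cograph is a `P₄`-free graph. -/
def IsCograph {α : Type*} (G : SimpleGraph α) : Prop :=
  ¬ Contains G (pathGraph 4)

/-- `G` is partitionable: its vertex set splits into a part inducing a triangle-free
graph and a part inducing a `P₃`-free graph. -/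
def Partitionable {α : Type*} (G : SimpleGraph α) : Prop :=
  ∃ A : Set α, (G.induce A).CliqueFree 3 ∧ ¬ Contains (G.induce Aᶜ) (pathGraph 3)

/-- `G` is monopolar: its vertex set splits into an independent set and a part
inducing a `P₃`-free graph. -/
def Monopolar {α : Type*} (G : SimpleGraph α) : Prop :=
  ∃ A : Set α, (G.induce A).CliqueFree 2 ∧ ¬ Contains (G.induce Aᶜ) (pathGraph 3)

/-- `G` is (1,2)-partitionable: its vertex set can be partitioned into at most one
clique and at most two independent sets (equivalently, covered by them). -/
def OneTwoPartitionable {α : Type*} (G : SimpleGraph α) : Prop :=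
  ∃ C S₁ S₂ : Set α, C ∪ S₁ ∪ S₂ = Set.univ ∧ G.IsClique C ∧
    (G.induce S₁).CliqueFree 2 ∧ (G.induce S₂).CliqueFree 2

/-- A threshold graph is a `(2K₂, C₄, P₄)`-free graph. -/
def IsThreshold {α : Type*} (G : SimpleGraph α) : Prop :=
  ¬ Contains G (gUnion (KG 2) (KG 2)) ∧ ¬ Contains G (cycleGraph 4) ∧
    ¬ Contains G (pathGraph 4)

/-- The diamond `K₂ ⊕ 2K₁`. -/
def diamond := gJoin (KG 2) (EG 2)

/-- The paw `K₁ ⊕ (K₁ ∪ K₂)`. -/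
def paw := gJoin (KG 1) (gUnion (KG 1) (KG 2))

/-- The butterfly `K₁ ⊕ 2K₂`. -/
def butterfly := gJoin (KG 1) (gUnion (KG 2) (KG 2))

def twoK2 := gUnion (KG 2) (KG 2)

def twoK3 := gUnion (KG 3) (KG 3)

def K2uK1 := gUnion (KG 2) (KG 1)


def H1 := gJoin (EG 2) (gJoin (EG 2) (gJoin (EG 2) (KG 1)))
def H2 := gJoin (pathGraph 3) (gJoin (KG 1) twoK2)
def H3 := gJoin (EG 2) (gJoin K2uK1 K2uK1)
def H4 := gJoin (pathGraph 3) (gUnion (KG 2) (pathGraph 3))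
def H5 := gJoin K2uK1 (gJoin (KG 1) twoK2)
def H6 := gJoin K2uK1 (gUnion (KG 3) (pathGraph 3))
def H7 := gJoin K2uK1 (gUnion (KG 2) (gJoin (pathGraph 3) (KG 1)))
def H8 := gJoin K2uK1 (gUnion (KG 2) (gJoin (KG 1) K2uK1))
def H9 := gJoin (KG 1) (gUnion (KG 3) (gJoin (cycleGraph 4) (KG 1)))
def H10 := gJoin (KG 1) (gUnion (KG 3) (gJoin (KG 1) (gUnion (pathGraph 3) (KG 2))))
def H11 := gJoin (KG 1) (gUnion (KG 3) (gJoin (KG 2) twoK2))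
def H12 := gJoin (KG 1) (gUnion (KG 3) (gJoin K2uK1 K2uK1))
def H13 := gJoin (KG 2) (gUnion (pathGraph 3) twoK3)
def H14 := gJoin (KG 2) (gUnion (KG 3) (gJoin (pathGraph 3) (KG 1)))
def H15 := gJoin (KG 2) (gUnion (KG 3) (gJoin (KG 1) (gUnion (KG 1) (KG 2))))
def H16 := gJoin (gUnion (KG 3) (KG 2)) (gUnion (KG 3) (KG 1))
def H17 := gJoin (KG 3) twoK3


/-!
Let `W` be the vertex set of `G - v`. Since `v` is adjacent to everything, a partition of `W`
into a clique and a triangle-free set, or a monopolar partition of `W` (an independent set and a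
cluster), would extend to a partition of `G` by adding `v` to the clique, resp. to the independent
set; by minimality, `W` itself splits into a triangle-free set `T` and a cluster `C`.

If `G - v` has a universal vertex `u`, then `u ∈ T` (a cluster through `u` is a clique), and
`W \ {u}` is a monopolar cograph that is neither a cluster nor (clique, triangle-free)-split.
Such a cograph contains `P₃ ∪ 2K₃`, `K₃ ∪ (P₃ ⊕ K₁)`, `K₃ ∪ paw`, `K₁ ⊕ 2K₃` or `2K₁ ⊕ 2K₂`;
joined with the edge `vu` these give `H13`, `H14`, `H15`, `H17`, `H2`.

Otherwise the connected cograph `G - v` is a join `P ⊕ Q` without universal vertices, and the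
cluster `C` lies in one side, say `P`, so `Q ⊆ T`. A non-split, non-cluster cograph contains
`C₄`, `K₂ ∪ P₃` or the butterfly, a non-split cluster contains `2K₂`, and a cluster with an edge
and a non-edge contains `K₂ ∪ K₁`. Depending on whether `Q` is independent, split or a cluster,
these configurations, joined with the induced `P₃` formed by `v` and a non-adjacent pair of the
other side, or with `v` alone, give `H1`, `H2`, `H4` or `H5`.

Every structural statement about cographs is proved by induction on the vertex set, using
Seinsche's theorem: a cograph on at least two vertices is a join or a disjoint union of two
smaller ones.
-/

lemma Set.union_sdiff_union_right_subset {α : Type*} (s t u : Set α) :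
    (s ∪ t) \ (u ∪ t) ⊆ s \ u :=
  fun _ ⟨hx, hn⟩ ↦ ⟨hx.resolve_right fun h ↦ hn (.inr h), fun h ↦ hn (.inl h)⟩

lemma Set.ssubset_of_union_eq {α : Type*} {s t u : Set α} (ht : t.Nonempty) (hst : Disjoint s t)
    (h : s ∪ t = u) : s ⊂ u := by
  obtain ⟨b, hb⟩ := ht
  exact h ▸ Set.ssubset_union_left_iff.2 fun hts ↦ hst.notMem_of_mem_right hb (hts hb)

namespace SimpleGraph

variable {α β γ δ : Type*}

/-! ### Joins and disjoint unions -/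

section JoinUnion

variable {G₁ : SimpleGraph β} {G₂ : SimpleGraph γ}

@[simp] lemma gJoin_adj_inl_inl {a b : β} : (gJoin G₁ G₂).Adj (.inl a) (.inl b) ↔ G₁.Adj a b :=
  Iff.rfl
@[simp] lemma gJoin_adj_inr_inr {a b : γ} : (gJoin G₁ G₂).Adj (.inr a) (.inr b) ↔ G₂.Adj a b :=
  Iff.rfl
@[simp] lemma gJoin_adj_inl_inr {a : β} {b : γ} : (gJoin G₁ G₂).Adj (.inl a) (.inr b) := trivial
@[simp] lemma gJoin_adj_inr_inl {a : γ} {b : β} : (gJoin G₁ G₂).Adj (.inr a) (.inl b) := trivial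
@[simp] lemma gUnion_adj_inl_inl {a b : β} : (gUnion G₁ G₂).Adj (.inl a) (.inl b) ↔ G₁.Adj a b :=
  Iff.rfl
@[simp] lemma gUnion_adj_inr_inr {a b : γ} : (gUnion G₁ G₂).Adj (.inr a) (.inr b) ↔ G₂.Adj a b :=
  Iff.rfl
@[simp] lemma not_gUnion_adj_inl_inr {a : β} {b : γ} : ¬ (gUnion G₁ G₂).Adj (.inl a) (.inr b) :=
  id
@[simp] lemma not_gUnion_adj_inr_inl {a : γ} {b : β} : ¬ (gUnion G₁ G₂).Adj (.inr a) (.inl b) :=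
  id

variable (G₁ G₂) (G₃ : SimpleGraph δ)

def gJoinAssoc : gJoin (gJoin G₁ G₂) G₃ ≃g gJoin G₁ (gJoin G₂ G₃) where
  toEquiv := Equiv.sumAssoc β γ δ
  map_rel_iff' := by rintro ((a | a) | a) ((b | b) | b) <;> simp

def gUnionAssoc : gUnion (gUnion G₁ G₂) G₃ ≃g gUnion G₁ (gUnion G₂ G₃) where
  toEquiv := Equiv.sumAssoc β γ δ
  map_rel_iff' := by rintro ((a | a) | a) ((b | b) | b) <;> simp

def gUnionComm : gUnion G₁ G₂ ≃g gUnion G₂ G₁ where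
  toEquiv := Equiv.sumComm β γ
  map_rel_iff' := by rintro (a | a) (b | b) <;> simp

end JoinUnion

section CompleteBetween

variable {G : SimpleGraph α} {A B C : Set α} {a b : α}

lemma IsCompleteBetween.mono {A' B' : Set α} (h : G.IsCompleteBetween A B) (hA : A' ⊆ A)
    (hB : B' ⊆ B) : G.IsCompleteBetween A' B' :=
  fun _ hx _ hy ↦ h (hA hx) (hB hy)

lemma IsCompleteBetween.not_adj_of_compl (h : Gᶜ.IsCompleteBetween A B) (ha : a ∈ A)
    (hb : b ∈ B) : ¬ G.Adj a b :=
  ((compl_adj _ _ _).1 (h ha hb)).2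

lemma isCompleteBetween_insert_left :
    G.IsCompleteBetween (insert a A) B ↔ (∀ b ∈ B, G.Adj a b) ∧ G.IsCompleteBetween A B := by
  simp [IsCompleteBetween]

lemma isCompleteBetween_singleton_left : G.IsCompleteBetween {a} B ↔ ∀ b ∈ B, G.Adj a b := by
  simp [IsCompleteBetween]

lemma isCompleteBetween_union_right :
    G.IsCompleteBetween A (B ∪ C) ↔ G.IsCompleteBetween A B ∧ G.IsCompleteBetween A C :=
  ⟨fun h ↦ ⟨h.mono subset_rfl Set.subset_union_left, h.mono subset_rfl Set.subset_union_right⟩,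
    fun h _ ha _ hbc ↦ hbc.elim (fun hb ↦ h.1 ha hb) (fun hc ↦ h.2 ha hc)⟩

lemma IsClique.union (hA : G.IsClique A) (hB : G.IsClique B) (hAB : G.IsCompleteBetween A B) :
    G.IsClique (A ∪ B) := by
  rintro x (hx | hx) y (hy | hy) hxy
  exacts [hA hx hy hxy, hAB hx hy, (hAB hy hx).symm, hB hx hy hxy]

lemma IsIndepSet.union (hA : G.IsIndepSet A) (hB : G.IsIndepSet B)
    (hAB : Gᶜ.IsCompleteBetween A B) : G.IsIndepSet (A ∪ B) := by
  rintro x (hx | hx) y (hy | hy) hxy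
  exacts [hA hx hy hxy, hAB.not_adj_of_compl hx hy, fun h ↦ hAB.not_adj_of_compl hy hx h.symm,
    hB hx hy hxy]

end CompleteBetween

lemma Preconnected.mem_of_adj_imp {H : SimpleGraph β} (hH : H.Preconnected) {s : Set β}
    (hs : ∀ ⦃x y⦄, H.Adj x y → x ∈ s → y ∈ s) {x y : β} (hx : x ∈ s) : y ∈ s := by
  induction (reachable_iff_reflTransGen _ _).1 (hH x y) with
  | refl => exact hx
  | tail _ hyz ih => exact hs hyz ih

/-! ### Induced subgraphs inside a vertex set -/

def ContainsIn (G : SimpleGraph α) (H : SimpleGraph β) (S : Set α) : Prop :=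
  ∃ f : H ↪g G, ∀ b, f b ∈ S

section ContainsIn

variable {G : SimpleGraph α} {H : SimpleGraph β} {H₁ : SimpleGraph β} {H₂ : SimpleGraph γ}
  {S T A B : Set α}

lemma containsIn_of_injective (f : β → α) (hinj : Function.Injective f)
    (hadj : ∀ a b, G.Adj (f a) (f b) ↔ H.Adj a b) (hS : ∀ b, f b ∈ S) : G.ContainsIn H S :=
  ⟨⟨⟨f, hinj⟩, hadj _ _⟩, hS⟩

lemma ContainsIn.mono (h : G.ContainsIn H S) (hST : S ⊆ T) : G.ContainsIn H T :=
  let ⟨f, hf⟩ := h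
  ⟨f, fun b ↦ hST (hf b)⟩

lemma ContainsIn.contains (h : G.ContainsIn H S) : Contains G H :=
  let ⟨f, _⟩ := h
  ⟨f⟩

lemma containsIn_iff_contains_induce : G.ContainsIn H S ↔ Contains (G.induce S) H := by
  constructor
  · rintro ⟨f, hf⟩
    exact ⟨⟨⟨fun b ↦ ⟨f b, hf b⟩, fun a b h ↦ f.injective (congrArg Subtype.val h)⟩,
      f.map_adj_iff⟩⟩
  · rintro ⟨f⟩
    exact ⟨(Embedding.induce S).comp f, fun b ↦ (f b).2⟩

lemma ContainsIn.of_iso {H' : SimpleGraph γ} (h : G.ContainsIn H S) (e : H' ≃g H) :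
    G.ContainsIn H' S :=
  let ⟨f, hf⟩ := h
  ⟨f.comp e.toEmbedding, fun _ ↦ hf _⟩

lemma ContainsIn.join (h₁ : G.ContainsIn H₁ A) (h₂ : G.ContainsIn H₂ B)
    (hAB : G.IsCompleteBetween A B) : G.ContainsIn (gJoin H₁ H₂) (A ∪ B) := by
  obtain ⟨f₁, hf₁⟩ := h₁
  obtain ⟨f₂, hf₂⟩ := h₂
  refine containsIn_of_injective (Sum.elim f₁ f₂)
    (f₁.injective.sumElim f₂.injective fun a b ↦ hAB.disjoint.ne_of_mem (hf₁ a) (hf₂ b)) ?_ ?_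
  · rintro (a | a) (b | b) <;> simp [hAB (hf₁ _) (hf₂ _), (hAB (hf₁ _) (hf₂ _)).symm]
  · rintro (a | a)
    exacts [.inl (hf₁ a), .inr (hf₂ a)]

lemma ContainsIn.union (h₁ : G.ContainsIn H₁ A) (h₂ : G.ContainsIn H₂ B)
    (hAB : Gᶜ.IsCompleteBetween A B) : G.ContainsIn (gUnion H₁ H₂) (A ∪ B) := by
  obtain ⟨f₁, hf₁⟩ := h₁
  obtain ⟨f₂, hf₂⟩ := h₂
  have hn a b : ¬ G.Adj (f₁ a) (f₂ b) := hAB.not_adj_of_compl (hf₁ a) (hf₂ b)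
  have hn' a b : ¬ G.Adj (f₂ a) (f₁ b) := fun h ↦ hn b a h.symm
  refine containsIn_of_injective (Sum.elim f₁ f₂)
    (f₁.injective.sumElim f₂.injective fun a b ↦ hAB.disjoint.ne_of_mem (hf₁ a) (hf₂ b)) ?_ ?_
  · rintro (a | a) (b | b) <;> simp [hn, hn']
  · rintro (a | a)
    exacts [.inl (hf₁ a), .inr (hf₂ a)]

lemma ContainsIn.exists_of_gJoin (h : G.ContainsIn (gJoin H₁ H₂) S) :
    ∃ A ⊆ S, ∃ B ⊆ S, G.ContainsIn H₁ A ∧ G.ContainsIn H₂ B ∧ G.IsCompleteBetween A B := by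
  obtain ⟨f, hf⟩ := h
  refine ⟨Set.range (f ∘ .inl), Set.range_subset_iff.2 fun _ ↦ hf _,
    Set.range (f ∘ .inr), Set.range_subset_iff.2 fun _ ↦ hf _,
    containsIn_of_injective _ (f.injective.comp Sum.inl_injective) (by simp) (⟨·, rfl⟩),
    containsIn_of_injective _ (f.injective.comp Sum.inr_injective) (by simp) (⟨·, rfl⟩), ?_⟩
  rintro _ ⟨a, rfl⟩ _ ⟨b, rfl⟩
  exact f.map_adj_iff.2 trivial

lemma ContainsIn.elim_union (h : G.ContainsIn H (A ∪ B)) (hH : H.Connected)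
    (hAB : Gᶜ.IsCompleteBetween A B) : G.ContainsIn H A ∨ G.ContainsIn H B := by
  obtain ⟨f, hf⟩ := h
  by_cases hA : ∃ b, f b ∈ A
  · obtain ⟨b₀, hb₀⟩ := hA
    refine .inl ⟨f, fun b ↦ hH.preconnected.mem_of_adj_imp (s := {b | f b ∈ A}) ?_ hb₀⟩
    exact fun x y hxy hx ↦ (hf y).resolve_right fun hy ↦
      hAB.not_adj_of_compl hx hy (f.map_adj_iff.2 hxy)
  · exact .inr ⟨f, fun b ↦ (hf b).resolve_left fun hb ↦ hA ⟨b, hb⟩⟩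

end ContainsIn

section Small

variable {G : SimpleGraph α} {S : Set α} {a b c d : α}

lemma containsIn_KG_one (a : α) : G.ContainsIn (KG 1) {a} :=
  containsIn_of_injective (fun _ ↦ a) (fun i j _ ↦ Subsingleton.elim i j)
    (fun i j ↦ by simp [KG, Subsingleton.elim i j]) (fun _ ↦ rfl)

lemma containsIn_KG_two (hab : G.Adj a b) : G.ContainsIn (KG 2) {a, b} := by
  refine containsIn_of_injective ![a, b] ?_ ?_ ?_
  · intro i j; fin_cases i <;> fin_cases j <;> simp [hab.ne, hab.ne']
  · intro i j; fin_cases i <;> fin_cases j <;> simp [KG, hab, hab.symm]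
  · intro i; fin_cases i <;> simp

lemma containsIn_EG_two (hne : a ≠ b) (hab : ¬ G.Adj a b) : G.ContainsIn (EG 2) {a, b} := by
  refine containsIn_of_injective ![a, b] ?_ ?_ ?_
  · intro i j; fin_cases i <;> fin_cases j <;> simp [hne, hne.symm]
  · intro i j; fin_cases i <;> fin_cases j <;> simp [EG, hab, G.adj_comm b a]
  · intro i; fin_cases i <;> simp

lemma containsIn_KG_three (hab : G.Adj a b) (hac : G.Adj a c) (hbc : G.Adj b c) :
    G.ContainsIn (KG 3) {a, b, c} := by
  refine containsIn_of_injective ![a, b, c] ?_ ?_ ?_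
  · intro i j
    fin_cases i <;> fin_cases j <;> simp [hab.ne, hab.ne', hac.ne, hac.ne', hbc.ne, hbc.ne']
  · intro i j
    fin_cases i <;> fin_cases j <;> simp [KG, hab, hac, hbc, hab.symm, hac.symm, hbc.symm]
  · intro i; fin_cases i <;> simp

lemma containsIn_pathGraph_three (hab : G.Adj a b) (hbc : G.Adj b c) (hac : ¬ G.Adj a c)
    (hne : a ≠ c) : G.ContainsIn (pathGraph 3) {a, b, c} := by
  refine containsIn_of_injective ![a, b, c] ?_ ?_ ?_
  · intro i j
    fin_cases i <;> fin_cases j <;> simp [hab.ne, hab.ne', hbc.ne, hbc.ne', hne, hne.symm]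
  · intro i j
    fin_cases i <;> fin_cases j <;>
      simp [pathGraph_adj, hab, hbc, hab.symm, hbc.symm, hac, G.adj_comm c a]
  · intro i; fin_cases i <;> simp

lemma containsIn_pathGraph_four (hab : G.Adj a b) (hbc : G.Adj b c) (hcd : G.Adj c d)
    (hac : ¬ G.Adj a c) (hbd : ¬ G.Adj b d) (had : ¬ G.Adj a d) :
    G.ContainsIn (pathGraph 4) {a, b, c, d} := by
  have hac' : a ≠ c := by rintro rfl; exact had hcd
  have hbd' : b ≠ d := by rintro rfl; exact had hab
  have had' : a ≠ d := by rintro rfl; exact hac hcd.symm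
  refine containsIn_of_injective ![a, b, c, d] ?_ ?_ ?_
  · intro i j
    fin_cases i <;> fin_cases j <;>
      simp [hab.ne, hab.ne', hbc.ne, hbc.ne', hcd.ne, hcd.ne', hac', hac'.symm, hbd', hbd'.symm,
        had', had'.symm]
  · intro i j
    fin_cases i <;> fin_cases j <;>
      simp [pathGraph_adj, hab, hbc, hcd, hab.symm, hbc.symm, hcd.symm, hac, hbd, had,
        G.adj_comm c a, G.adj_comm d b, G.adj_comm d a]
  · intro i; fin_cases i <;> simp

lemma ContainsIn.exists_of_EG_two (h : G.ContainsIn (EG 2) S) :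
    ∃ x ∈ S, ∃ y ∈ S, x ≠ y ∧ ¬ G.Adj x y := by
  obtain ⟨f, hf⟩ := h
  exact ⟨f 0, hf 0, f 1, hf 1, f.injective.ne (by decide),
    fun h ↦ by simpa [EG] using f.map_adj_iff.1 h⟩

lemma containsIn_EG_two_of_not_isClique (h : ¬ G.IsClique S) : G.ContainsIn (EG 2) S := by
  obtain ⟨x, hx, y, hy, hxy, hnxy⟩ : ∃ x ∈ S, ∃ y ∈ S, x ≠ y ∧ ¬ G.Adj x y := by
    simpa [IsClique, Set.Pairwise] using h
  exact (containsIn_EG_two hxy hnxy).mono (Set.insert_subset hx (Set.singleton_subset_iff.2 hy))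

lemma exists_adj_of_not_isIndepSet (h : ¬ G.IsIndepSet S) : ∃ x ∈ S, ∃ y ∈ S, G.Adj x y := by
  simp only [IsIndepSet, Set.Pairwise, not_forall, not_not] at h
  obtain ⟨x, hx, y, hy, -, hxy⟩ := h
  exact ⟨x, hx, y, hy, hxy⟩

lemma containsIn_KG_two_of_not_isIndepSet (h : ¬ G.IsIndepSet S) : G.ContainsIn (KG 2) S := by
  obtain ⟨x, hx, y, hy, hxy⟩ := exists_adj_of_not_isIndepSet h
  exact (containsIn_KG_two hxy).mono (Set.insert_subset hx (Set.singleton_subset_iff.2 hy))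

end Small

/-! ### Triangle-free sets, clusters and their partitions -/

def IsClusterOn (G : SimpleGraph α) (S : Set α) : Prop :=
  ∀ ⦃x⦄, x ∈ S → ∀ ⦃y⦄, y ∈ S → ∀ ⦃z⦄, z ∈ S → G.Adj x y → G.Adj y z → x ≠ z → G.Adj x z

def IsSplitOn (G : SimpleGraph α) (S : Set α) : Prop :=
  ∃ K ⊆ S, G.IsClique K ∧ G.IsIndepSet (S \ K)

def SplitsCliqueTriangleFree (G : SimpleGraph α) (S : Set α) : Prop :=
  ∃ K ⊆ S, G.IsClique K ∧ G.CliqueFreeOn (S \ K) 3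

def IsMonopolarOn (G : SimpleGraph α) (S : Set α) : Prop :=
  ∃ I ⊆ S, G.IsIndepSet I ∧ G.IsClusterOn (S \ I)

section SetProperties

variable {G : SimpleGraph α} {S T A B : Set α}

lemma IsClusterOn.mono (h : G.IsClusterOn S) (hTS : T ⊆ S) : G.IsClusterOn T :=
  fun _ hx _ hy _ hz ↦ h (hTS hx) (hTS hy) (hTS hz)

lemma IsClique.isClusterOn (h : G.IsClique S) : G.IsClusterOn S :=
  fun _ hx _ _ _ hz _ _ hne ↦ h hx hz hne

lemma not_isClusterOn_iff : ¬ G.IsClusterOn S ↔ G.ContainsIn (pathGraph 3) S := by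
  constructor
  · intro h
    simp only [IsClusterOn, not_forall] at h
    obtain ⟨x, hx, y, hy, z, hz, hxy, hyz, hne, hxz⟩ := h
    exact (containsIn_pathGraph_three hxy hyz hxz hne).mono (by simp [Set.insert_subset_iff, *])
  · rintro ⟨f, hf⟩ h
    have h02 := f.map_adj_iff.1 <| h (hf 0) (hf 1) (hf 2)
      (f.map_adj_iff.2 (by simp [pathGraph_adj])) (f.map_adj_iff.2 (by simp [pathGraph_adj]))
      (f.injective.ne (by decide))
    simp [pathGraph_adj] at h02

lemma cliqueFreeOn_three_iff : G.CliqueFreeOn S 3 ↔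
    ∀ ⦃a⦄, a ∈ S → ∀ ⦃b⦄, b ∈ S → ∀ ⦃c⦄, c ∈ S → G.Adj a b → G.Adj a c → ¬ G.Adj b c := by
  classical
  constructor
  · intro h a ha b hb c hc hab hac hbc
    exact h (by simp [Set.insert_subset_iff, *]) (is3Clique_triple_iff.2 ⟨hab, hac, hbc⟩)
  · rintro h t hts ht
    obtain ⟨a, b, c, hab, hac, hbc, rfl⟩ := is3Clique_iff.1 ht
    simp only [Finset.coe_insert, Finset.coe_singleton, Set.insert_subset_iff,
      Set.singleton_subset_iff] at hts
    exact h hts.1 hts.2.1 hts.2.2 hab hac hbc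

lemma not_cliqueFreeOn_three_iff : ¬ G.CliqueFreeOn S 3 ↔ G.ContainsIn (KG 3) S := by
  rw [cliqueFreeOn_three_iff]
  constructor
  · intro h
    simp only [not_forall, not_not] at h
    obtain ⟨a, ha, b, hb, c, hc, hab, hac, hbc⟩ := h
    exact (containsIn_KG_three hab hac hbc).mono (by simp [Set.insert_subset_iff, *])
  · rintro ⟨f, hf⟩ h
    exact h (hf 0) (hf 1) (hf 2) (f.map_adj_iff.2 (by simp [KG]))
      (f.map_adj_iff.2 (by simp [KG])) (f.map_adj_iff.2 (by simp [KG]))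

lemma IsIndepSet.cliqueFreeOn_three (h : G.IsIndepSet S) : G.CliqueFreeOn S 3 :=
  CliqueFreeOn.mono G (by norm_num) ((cliqueFreeOn_two G).2 h)

lemma IsIndepSet.cliqueFreeOn_three_union (hA : G.IsIndepSet A) (hB : G.IsIndepSet B) :
    G.CliqueFreeOn (A ∪ B) 3 := by
  rw [cliqueFreeOn_three_iff]
  rintro a (ha | ha) b (hb | hb) c (hc | hc) hab hac hbc
  exacts [hA ha hb hab.ne hab, hA ha hb hab.ne hab, hA ha hc hac.ne hac, hB hb hc hbc.ne hbc,
    hA hb hc hbc.ne hbc, hB ha hc hac.ne hac, hB ha hb hab.ne hab, hB ha hb hab.ne hab]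

lemma CliqueFreeOn.union (hA : G.CliqueFreeOn A 3) (hB : G.CliqueFreeOn B 3)
    (hAB : Gᶜ.IsCompleteBetween A B) : G.CliqueFreeOn (A ∪ B) 3 := by
  rw [cliqueFreeOn_three_iff] at *
  have hn {x y} (hx : x ∈ A) (hy : y ∈ B) : ¬ G.Adj x y := hAB.not_adj_of_compl hx hy
  rintro a (ha | ha) b (hb | hb) c (hc | hc) hab hac hbc <;>
    first
    | exact hA ha hb hc hab hac hbc | exact hB ha hb hc hab hac hbc
    | exact hn ha hb hab | exact hn hb ha hab.symm | exact hn ha hc hac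
    | exact hn hc ha hac.symm

lemma IsIndepSet.isSplitOn (h : G.IsIndepSet S) : G.IsSplitOn S :=
  ⟨∅, Set.empty_subset _, isClique_empty, by rwa [Set.sdiff_empty]⟩

lemma CliqueFreeOn.splitsCliqueTriangleFree (h : G.CliqueFreeOn S 3) :
    G.SplitsCliqueTriangleFree S :=
  ⟨∅, Set.empty_subset _, isClique_empty, by rwa [Set.sdiff_empty]⟩

lemma IsSplitOn.union_isClique (hA : G.IsSplitOn A) (hB : G.IsClique B)
    (hAB : G.IsCompleteBetween A B) : G.IsSplitOn (A ∪ B) :=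
  let ⟨K, hKA, hK, hI⟩ := hA
  ⟨K ∪ B, Set.union_subset_union_left B hKA, hK.union hB (hAB.mono hKA subset_rfl),
    hI.mono (Set.union_sdiff_union_right_subset A B K)⟩

lemma SplitsCliqueTriangleFree.union_isClique (hA : G.SplitsCliqueTriangleFree A)
    (hB : G.IsClique B) (hAB : G.IsCompleteBetween A B) : G.SplitsCliqueTriangleFree (A ∪ B) :=
  let ⟨K, hKA, hK, hT⟩ := hA
  ⟨K ∪ B, Set.union_subset_union_left B hKA, hK.union hB (hAB.mono hKA subset_rfl),
    CliqueFreeOn.subset G (Set.union_sdiff_union_right_subset A B K) hT⟩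

lemma IsSplitOn.union_isIndepSet (hA : G.IsSplitOn A) (hB : G.IsIndepSet B)
    (hAB : Gᶜ.IsCompleteBetween A B) : G.IsSplitOn (A ∪ B) := by
  obtain ⟨K, hKA, hK, hI⟩ := hA
  refine ⟨K, hKA.trans Set.subset_union_left, hK,
    (hI.union hB (hAB.mono Set.sdiff_subset subset_rfl)).mono ?_⟩
  rw [Set.union_sdiff_distrib]
  exact Set.union_subset_union_right _ Set.sdiff_subset

lemma SplitsCliqueTriangleFree.union_cliqueFreeOn (hA : G.SplitsCliqueTriangleFree A)
    (hB : G.CliqueFreeOn B 3) (hAB : Gᶜ.IsCompleteBetween A B) :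
    G.SplitsCliqueTriangleFree (A ∪ B) := by
  obtain ⟨K, hKA, hK, hT⟩ := hA
  refine ⟨K, hKA.trans Set.subset_union_left, hK,
    CliqueFreeOn.subset G ?_ (hT.union hB (hAB.mono Set.sdiff_subset subset_rfl))⟩
  rw [Set.union_sdiff_distrib]
  exact Set.union_subset_union_right _ Set.sdiff_subset

lemma IsSplitOn.splitsCliqueTriangleFree_union (hA : G.IsSplitOn A) (hB : G.IsSplitOn B)
    (hAB : G.IsCompleteBetween A B) : G.SplitsCliqueTriangleFree (A ∪ B) := by
  obtain ⟨K, hKA, hK, hI⟩ := hA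
  obtain ⟨L, hLB, hL, hJ⟩ := hB
  refine ⟨K ∪ L, Set.union_subset_union hKA hLB, hK.union hL (hAB.mono hKA hLB),
    CliqueFreeOn.subset G ?_ (hI.cliqueFreeOn_three_union hJ)⟩
  rintro x ⟨hx | hx, hn⟩
  exacts [.inl ⟨hx, fun h ↦ hn (.inl h)⟩, .inr ⟨hx, fun h ↦ hn (.inr h)⟩]

lemma isMonopolarOn_union (hA : G.IsIndepSet A) (hB : G.IsClusterOn B) :
    G.IsMonopolarOn (A ∪ B) :=
  ⟨A, Set.subset_union_left, hA, hB.mono fun _ hx ↦ hx.1.resolve_left hx.2⟩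

lemma IsMonopolarOn.mono (h : G.IsMonopolarOn S) (hAS : A ⊆ S) : G.IsMonopolarOn A :=
  let ⟨I, _, hI, hC⟩ := h
  ⟨I ∩ A, Set.inter_subset_right, hI.mono Set.inter_subset_left,
    hC.mono fun _ hx ↦ ⟨hAS hx.1, fun hI ↦ hx.2 ⟨hI, hx.1⟩⟩⟩

end SetProperties

section Cluster

variable {G : SimpleGraph α} {S A B C : Set α} {a b x y : α}

lemma IsClusterOn.isClique_inter (h : G.IsClusterOn S) (ha : a ∈ S) :
    G.IsClique (insert a (G.neighborSet a) ∩ S) := by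
  rintro x ⟨rfl | hax, hx⟩ y ⟨rfl | hay, hy⟩ hxy
  exacts [absurd rfl hxy, hay, hax.symm, h hx ha hy hax.symm hay hxy]

lemma IsClusterOn.compl_isCompleteBetween (h : G.IsClusterOn S) (ha : a ∈ S) :
    Gᶜ.IsCompleteBetween (insert a (G.neighborSet a) ∩ S) (S \ insert a (G.neighborSet a)) := by
  rintro x ⟨hxN, hx⟩ y ⟨hy, hyN⟩
  refine (compl_adj _ _ _).2 ⟨fun hxy ↦ hyN (hxy ▸ hxN), fun hxy ↦ hyN ?_⟩
  rcases hxN with rfl | hax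
  exacts [.inr hxy, .inr (h ha hx hy hax hxy fun hay ↦ hyN (.inl hay.symm))]

lemma IsClusterOn.containsIn_twoK2 (h : G.IsClusterOn S) (hS : ¬ G.IsSplitOn S) :
    G.ContainsIn twoK2 S := by
  obtain ⟨a, ha, b, hb, hab⟩ := exists_adj_of_not_isIndepSet fun hI ↦ hS hI.isSplitOn
  obtain ⟨c, ⟨hc, hcN⟩, d, ⟨hd, hdN⟩, hcd⟩ := exists_adj_of_not_isIndepSet fun hI ↦
    hS ⟨_, Set.inter_subset_right, h.isClique_inter ha, by rwa [Set.sdiff_inter_self_eq_sdiff]⟩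
  refine ((containsIn_KG_two hab).union (containsIn_KG_two hcd)
    ((h.compl_isCompleteBetween ha).mono ?_ ?_)).mono ?_
  · simp [Set.insert_subset_iff, ha, hb, hab]
  · simp [Set.insert_subset_iff, hc, hd, hcN, hdN]
  · simp [Set.insert_subset_iff, ha, hb, hc, hd]

lemma IsClusterOn.containsIn_twoK3 (h : G.IsClusterOn S) (hS : ¬ G.SplitsCliqueTriangleFree S) :
    G.ContainsIn twoK3 S := by
  obtain ⟨f, hf⟩ := not_cliqueFreeOn_three_iff.1 fun hT ↦ hS hT.splitsCliqueTriangleFree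
  have hK : G.ContainsIn (KG 3) (insert (f 0) (G.neighborSet (f 0)) ∩ S) := by
    refine ⟨f, fun i ↦ ⟨?_, hf i⟩⟩
    by_cases hi : i = 0
    · exact .inl (congrArg f hi)
    · exact .inr (f.map_adj_iff.2 (by simpa [KG] using Ne.symm hi))
  have hK' := not_cliqueFreeOn_three_iff.1 fun hT ↦ hS
    ⟨_, Set.inter_subset_right, h.isClique_inter (hf 0), by rwa [Set.sdiff_inter_self_eq_sdiff]⟩
  exact (hK.union hK' (h.compl_isCompleteBetween (hf 0))).mono (by simp)

lemma IsClusterOn.containsIn_K2uK1 (h : G.IsClusterOn S) (ha : a ∈ S) (hb : b ∈ S)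
    (hab : G.Adj a b) (hx : x ∈ S) (hy : y ∈ S) (hxy : x ≠ y) (hnxy : ¬ G.Adj x y) :
    G.ContainsIn K2uK1 S := by
  by_cases hx' : ∃ x' ∈ S, G.Adj x x'
  · obtain ⟨x', hx'S, hxx'⟩ := hx'
    have hx'y : ¬ G.Adj x' y := fun h' ↦ hnxy (h hx hx'S hy hxx' h' hxy)
    have hx'y' : x' ≠ y := fun h ↦ hnxy (h ▸ hxx')
    refine ((containsIn_KG_two hxx').union (containsIn_KG_one y) ?_).mono ?_
    · simp [IsCompleteBetween, compl_adj, hxy, hnxy, hx'y, hx'y']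
    · simp [Set.insert_subset_iff, hx, hx'S, hy]
  · push Not at hx'
    have hax : a ≠ x := fun h ↦ hx' b hb (h ▸ hab)
    have hbx : b ≠ x := fun h ↦ hx' a ha (h ▸ hab.symm)
    refine ((containsIn_KG_two hab).union (containsIn_KG_one x) ?_).mono ?_
    · simp [IsCompleteBetween, compl_adj, G.adj_comm _ x, hx' a ha, hx' b hb, hax, hbx]
    · simp [Set.insert_subset_iff, ha, hb, hx]

lemma IsClusterOn.subset_or_subset (h : G.IsClusterOn C) (hC : C ⊆ A ∪ B)
    (hAB : G.IsCompleteBetween A B) (hnc : ¬ G.IsClique C) : C ⊆ A ∨ C ⊆ B := by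
  by_contra! hAB'
  obtain ⟨⟨c₁, hc₁, hc₁A⟩, ⟨c₂, hc₂, hc₂B⟩⟩ := And.imp Set.not_subset.1 Set.not_subset.1 hAB'
  have hc₁B := (hC hc₁).resolve_left hc₁A
  have hc₂A := (hC hc₂).resolve_right hc₂B
  refine hnc fun x hx y hy hxy ↦ ?_
  rcases hC hx with hxA | hxB <;> rcases hC hy with hyA | hyB
  · exact h hx hc₁ hy (hAB hxA hc₁B) (hAB hyA hc₁B).symm hxy
  · exact hAB hxA hyB
  · exact (hAB hyA hxB).symm
  · exact h hx hc₂ hy (hAB hc₂A hxB).symm (hAB hc₂A hyB) hxy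

end Cluster

lemma containsIn_K2uK1_or_C4 {G : SimpleGraph α} {S : Set α} {a b : α} (ha : a ∈ S)
    (hb : b ∈ S) (hab : G.Adj a b) (hnn : ∀ x ∈ S, ∃ y ∈ S, y ≠ x ∧ ¬ G.Adj x y) :
    G.ContainsIn K2uK1 S ∨ G.ContainsIn (gJoin (EG 2) (EG 2)) S := by
  by_cases hc : ∃ c ∈ S, c ≠ a ∧ c ≠ b ∧ ¬ G.Adj a c ∧ ¬ G.Adj b c
  · obtain ⟨c, hc, hca, hcb, hac, hbc⟩ := hc
    refine .inl (((containsIn_KG_two hab).union (containsIn_KG_one c) ?_).mono ?_)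
    · simp [IsCompleteBetween, compl_adj, hca.symm, hcb.symm, hac, hbc]
    · simp [Set.insert_subset_iff, ha, hb, hc]
  push Not at hc
  obtain ⟨c, hcS, hca, hac⟩ := hnn a ha
  obtain ⟨d, hdS, hdb, hbd⟩ := hnn b hb
  have hcb : c ≠ b := by rintro rfl; exact hac hab
  have hda : d ≠ a := by rintro rfl; exact hbd hab.symm
  have hbc : G.Adj b c := hc c hcS hca hcb hac
  have had : G.Adj a d := by_contra fun h ↦ hbd (hc d hdS hda hdb h)
  by_cases hcd : G.Adj c d
  · refine .inr (((containsIn_EG_two hca.symm hac).join (containsIn_EG_two hdb.symm hbd)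
      ?_).mono ?_)
    · simp [IsCompleteBetween, had, hab, hbc.symm, hcd]
    · simp [Set.insert_subset_iff, ha, hb, hcS, hdS]
  · have hcd' : c ≠ d := by rintro rfl; exact hbd hbc
    refine .inl (((containsIn_KG_two hbc).union (containsIn_KG_one d) ?_).mono ?_)
    · simp [IsCompleteBetween, compl_adj, hdb.symm, hcd', hbd, hcd]
    · simp [Set.insert_subset_iff, hb, hcS, hdS]

/-! ### Seinsche's theorem -/

section Seinsche

variable {G : SimpleGraph α} {S A : Set α} {a b c d r v w x : α}

/-- The complement of `0 – 1 – 2 – 3` is the path `2 – 0 – 3 – 1`. -/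
def pathGraphFourComplIso : (pathGraph 4)ᶜ ≃g pathGraph 4 where
  toEquiv := ⟨![1, 3, 0, 2], ![2, 0, 3, 1], by decide, by decide⟩
  map_rel_iff' := by
    intro a b; fin_cases a <;> fin_cases b <;> simp [pathGraph_adj, compl_adj]

lemma _root_.IsCograph.compl (hG : IsCograph G) : IsCograph Gᶜ := by
  rintro ⟨f⟩
  exact hG (compl_isIndContained_compl.1 ⟨f.comp pathGraphFourComplIso.toEmbedding⟩)

lemma _root_.IsCograph.adj_of_path (hG : IsCograph G) (hab : G.Adj a b) (hbc : G.Adj b c)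
    (hcd : G.Adj c d) (hac : ¬ G.Adj a c) (hbd : ¬ G.Adj b d) : G.Adj a d := by
  by_contra had
  exact hG (containsIn_pathGraph_four hab hbc hcd hac hbd had).contains

lemma exists_adj_of_connected (hS : (G.induce S).Connected) (hAS : A ⊆ S) (ha : a ∈ A)
    (hr : r ∈ S) (hrA : r ∉ A) : ∃ x ∈ A, ∃ y ∈ S, y ∉ A ∧ G.Adj x y := by
  by_contra! hno
  refine hrA (hS.preconnected.mem_of_adj_imp (x := ⟨a, hAS ha⟩) (y := ⟨r, hr⟩)
    (s := {y | y.1 ∈ A}) (fun x y hxy hx ↦ ?_) ha)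
  exact by_contra fun hy ↦ hno _ hx _ y.2 hy hxy

lemma exists_adj_of_connected_singleton (hS : (G.induce S).Connected) (hv : v ∈ S) (hw : w ∈ S)
    (hwv : w ≠ v) : ∃ y ∈ S, y ≠ v ∧ G.Adj v y := by
  obtain ⟨x, hx, y, hy, hyv, hxy⟩ :=
    exists_adj_of_connected hS (Set.singleton_subset_iff.2 hv) rfl hw hwv
  exact ⟨y, hy, hyv, Set.mem_singleton_iff.1 hx ▸ hxy⟩

lemma exists_compl_isCompleteBetween_of_not_connected (hx : x ∈ S)
    (h : ¬ (G.induce S).Connected) :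
    ∃ A B, x ∈ A ∧ B.Nonempty ∧ A ∪ B = S ∧ Gᶜ.IsCompleteBetween A B := by
  set A := {y | ∃ hy : y ∈ S, (G.induce S).Reachable ⟨x, hx⟩ ⟨y, hy⟩}
  have hB : (S \ A).Nonempty := by
    by_contra! hB
    have hreach (y : S) : (G.induce S).Reachable ⟨x, hx⟩ y :=
      by_contra fun hy ↦ Set.eq_empty_iff_forall_notMem.1 hB y ⟨y.2, fun ⟨_, h⟩ ↦ hy h⟩
    exact h ((connected_iff _).2
      ⟨fun u w ↦ (hreach u).symm.trans (hreach w), ⟨⟨x, hx⟩⟩⟩)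
  refine ⟨A, S \ A, ⟨hx, .refl _⟩, hB, Set.union_sdiff_cancel fun y hy ↦ hy.1, ?_⟩
  rintro a ⟨ha, hxa⟩ b ⟨hb, hbA⟩
  refine (compl_adj _ _ _).2 ⟨fun hab ↦ hbA (hab ▸ ⟨ha, hxa⟩), fun hab ↦ hbA ⟨hb, ?_⟩⟩
  exact hxa.trans (Adj.reachable (G := G.induce S) (u := ⟨a, ha⟩) (v := ⟨b, hb⟩) hab)

/-- `v` has a non-neighbour `x` (as `Gᶜ[S]` is connected) and a neighbour `z` in a part of
`G[S \ {v}]` avoiding `x`; a path from `x` to `v` leaves the non-neighbours of `v` in the part of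
`x` along an edge `x' y`, and then `x' y v z` is an induced `P₄`. -/
lemma _root_.IsCograph.false_of_connected_of_not_connected_diff (hG : IsCograph G)
    (h : (G.induce S).Connected) (hc : (Gᶜ.induce S).Connected) (hv : v ∈ S)
    (hS' : ¬ (G.induce (S \ {v})).Connected) (hne : (S \ {v}).Nonempty) : False := by
  obtain ⟨w, hw⟩ := hne
  obtain ⟨x, hxS, hxv, hvx⟩ := exists_adj_of_connected_singleton hc hv hw.1 hw.2
  replace hvx : ¬ G.Adj v x := ((compl_adj _ _ _).1 hvx).2
  obtain ⟨A, B, hxA, ⟨b, hb⟩, hAB, hanti⟩ :=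
    exists_compl_isCompleteBetween_of_not_connected (show x ∈ S \ {v} from ⟨hxS, hxv⟩) hS'
  have hAS : A ⊆ S \ {v} := hAB ▸ Set.subset_union_left
  have hBS : B ⊆ S \ {v} := hAB ▸ Set.subset_union_right
  have hmem {y} (hy : y ∈ S) (hyv : y ≠ v) : y ∈ A ∨ y ∈ B := by
    rw [← Set.mem_union, hAB]; exact ⟨hy, hyv⟩
  obtain ⟨z, hzB, y, hyS, hyB, hzy⟩ :=
    exists_adj_of_connected h (fun p hp ↦ (hBS hp).1) hb hv fun hvB ↦ (hBS hvB).2 rfl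
  have hzv : G.Adj z v := by
    by_contra hzv
    have hyv : y ≠ v := by rintro rfl; exact hzv hzy
    exact hanti.not_adj_of_compl ((hmem hyS hyv).resolve_right hyB) hzB hzy.symm
  obtain ⟨x', ⟨hx'A, hvx'⟩, y, hyS, hyN, hx'y⟩ :=
    exists_adj_of_connected h (A := {p | p ∈ A ∧ ¬ G.Adj v p}) (fun p hp ↦ (hAS hp.1).1)
      ⟨hxA, hvx⟩ hv fun hvN ↦ (hAS hvN.1).2 rfl
  have hyv : y ≠ v := by rintro rfl; exact hvx' hx'y.symm
  have hyA : y ∈ A := (hmem hyS hyv).resolve_right fun hyB ↦ hanti.not_adj_of_compl hx'A hyB hx'y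
  have hvy : G.Adj v y := by_contra fun hvy ↦ hyN ⟨hyA, hvy⟩
  exact hanti.not_adj_of_compl hx'A hzB <| hG.adj_of_path hx'y hvy.symm hzv.symm
    (fun h ↦ hvx' h.symm) (hanti.not_adj_of_compl hyA hzB)

variable [Finite α]

/-- Since `P₄` is self-complementary, removing a vertex from a set on which both `G` and `Gᶜ`
are connected reduces, by induction, to the previous lemma for `G` or for `Gᶜ`. -/
lemma _root_.IsCograph.subsingleton_of_connected (hG : IsCograph G) (h : (G.induce S).Connected)
    (hc : (Gᶜ.induce S).Connected) : S.Subsingleton := by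
  induction S using WellFoundedLT.induction generalizing G with | _ S ih => ?_
  rw [← Set.not_nontrivial_iff]
  rintro ⟨v, hv, w, hw, hvw⟩
  have hne : (S \ {v}).Nonempty := ⟨w, hw, hvw.symm⟩
  by_cases hsub : (S \ {v}).Subsingleton
  · obtain ⟨y, hyS, hyv, hvy⟩ := exists_adj_of_connected_singleton h hv hw hvw.symm
    obtain ⟨y', hyS', hyv', hvy'⟩ := exists_adj_of_connected_singleton hc hv hw hvw.symm
    obtain rfl : y = y' := hsub ⟨hyS, hyv⟩ ⟨hyS', hyv'⟩
    exact ((compl_adj _ _ _).1 hvy').2 hvy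
  by_cases hS' : (G.induce (S \ {v})).Connected
  · exact hG.compl.false_of_connected_of_not_connected_diff hc (by rwa [compl_compl]) hv
      (fun hcS' ↦ hsub (ih _ (Set.sdiff_singleton_ssubset.2 hv) hG hS' hcS')) hne
  · exact hG.false_of_connected_of_not_connected_diff h hc hv hS' hne

lemma _root_.IsCograph.exists_isCompleteBetween (hG : IsCograph G)
    (h : (G.induce S).Connected) (hS : S.Nontrivial) :
    ∃ A B, A.Nonempty ∧ B.Nonempty ∧ A ∪ B = S ∧ G.IsCompleteBetween A B := by
  obtain ⟨x, hx⟩ := hS.nonempty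
  obtain ⟨A, B, hxA, hB, hAB, hcompl⟩ := exists_compl_isCompleteBetween_of_not_connected hx
    fun hc ↦ hS.not_subsingleton (hG.subsingleton_of_connected h hc)
  exact ⟨A, B, ⟨x, hxA⟩, hB, hAB, by rwa [compl_compl] at hcompl⟩

lemma _root_.IsCograph.exists_split (hG : IsCograph G) (hS : S.Nontrivial) :
    ∃ A B, A.Nonempty ∧ B.Nonempty ∧ A ∪ B = S ∧
      (G.IsCompleteBetween A B ∨ Gᶜ.IsCompleteBetween A B) := by
  by_cases h : (G.induce S).Connected
  · obtain ⟨A, B, hA, hB, hAB, hcompl⟩ := hG.exists_isCompleteBetween h hS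
    exact ⟨A, B, hA, hB, hAB, .inl hcompl⟩
  · obtain ⟨x, hx⟩ := hS.nonempty
    obtain ⟨A, B, hxA, hB, hAB, hcompl⟩ := exists_compl_isCompleteBetween_of_not_connected hx h
    exact ⟨A, B, ⟨x, hxA⟩, hB, hAB, .inr hcompl⟩

end Seinsche

/-! ### Forbidden configurations in cographs -/

lemma containsIn_union_of_KG_three {G : SimpleGraph α} {X Y : Set α} (hY : G.ContainsIn (KG 3) Y)
    (hXY : Gᶜ.IsCompleteBetween Y X)
    (hX : G.ContainsIn paw X ∨ G.ContainsIn (gJoin (pathGraph 3) (KG 1)) X ∨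
      G.ContainsIn (gUnion (pathGraph 3) (KG 3)) X) :
    G.ContainsIn (gUnion (pathGraph 3) twoK3) (Y ∪ X) ∨
      G.ContainsIn (gUnion (KG 3) (gJoin (pathGraph 3) (KG 1))) (Y ∪ X) ∨
      G.ContainsIn (gUnion (KG 3) paw) (Y ∪ X) := by
  rcases hX with hX | hX | hX
  · exact .inr (.inr (hY.union hX hXY))
  · exact .inr (.inl (hY.union hX hXY))
  · rw [Set.union_comm]
    exact .inl ((hX.union hY hXY.symm).of_iso (gUnionAssoc _ _ _).symm)

section Cograph

variable [Finite α] {G : SimpleGraph α} {S : Set α}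

theorem _root_.IsCograph.containsIn_of_not_isSplitOn (hG : IsCograph G) (hS : ¬ G.IsSplitOn S)
    (hC : ¬ G.IsClusterOn S) :
    G.ContainsIn (gJoin (EG 2) (EG 2)) S ∨ G.ContainsIn (gUnion (KG 2) (pathGraph 3)) S ∨
      G.ContainsIn butterfly S := by
  induction S using WellFoundedLT.induction with | _ S ih => ?_
  have hnt : S.Nontrivial := by
    by_contra h
    exact hS (IsIndepSet.isSplitOn ((Set.not_nontrivial_iff.1 h).pairwise _))
  obtain ⟨A, B, hA, hB, hABS, hAB | hAB⟩ := hG.exists_split hnt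
  · wlog hBc : G.IsClique B generalizing A B with H
    · by_cases hAc : G.IsClique A
      · exact H B A hB hA (by rw [Set.union_comm, hABS]) hAB.symm hAc
      · exact .inl (hABS ▸ (containsIn_EG_two_of_not_isClique hAc).join
          (containsIn_EG_two_of_not_isClique hBc) hAB)
    have hAS : A ⊂ S := Set.ssubset_of_union_eq hB hAB.disjoint hABS
    have hsA : ¬ G.IsSplitOn A := fun h ↦ hS (hABS ▸ h.union_isClique hBc hAB)
    by_cases hCA : G.IsClusterOn A
    · obtain ⟨b, hb⟩ := hB
      refine .inr (.inr (((containsIn_KG_one b).join (hCA.containsIn_twoK2 hsA)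
        (hAB.symm.mono (Set.singleton_subset_iff.2 hb) subset_rfl)).mono ?_))
      exact Set.union_subset (hABS ▸ Set.singleton_subset_iff.2 (.inr hb)) hAS.le
    · exact (ih A hAS hsA hCA).imp (·.mono hAS.le) (Or.imp (·.mono hAS.le) (·.mono hAS.le))
  · have hP3 := not_isClusterOn_iff.1 hC
    rw [← hABS] at hP3
    wlog hP3A : G.ContainsIn (pathGraph 3) A generalizing A B with H
    · exact H B A hB hA (by rw [Set.union_comm, hABS]) hAB.symm (by rwa [Set.union_comm])
        ((hP3.elim_union (pathGraph_connected 2) hAB).resolve_left hP3A)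
    by_cases hIB : G.IsIndepSet B
    · have hAS : A ⊂ S := Set.ssubset_of_union_eq hB hAB.disjoint hABS
      exact (ih A hAS (fun h ↦ hS (hABS ▸ h.union_isIndepSet hIB hAB))
        (not_isClusterOn_iff.2 hP3A)).imp (·.mono hAS.le) (Or.imp (·.mono hAS.le) (·.mono hAS.le))
    · rw [← hABS, Set.union_comm]
      exact .inr (.inl ((containsIn_KG_two_of_not_isIndepSet hIB).union hP3A hAB.symm))

theorem _root_.IsCograph.containsIn_of_not_cliqueFreeOn (hG : IsCograph G)
    (hT : ¬ G.CliqueFreeOn S 3) (hC : ¬ G.IsClusterOn S) :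
    G.ContainsIn paw S ∨ G.ContainsIn (gJoin (pathGraph 3) (KG 1)) S ∨
      G.ContainsIn (gUnion (pathGraph 3) (KG 3)) S := by
  induction S using WellFoundedLT.induction with | _ S ih => ?_
  obtain ⟨x, hx, y, hy, z, hz, hxy, hyz, hne, hxz⟩ :
      ∃ x ∈ S, ∃ y ∈ S, ∃ z ∈ S, G.Adj x y ∧ G.Adj y z ∧ x ≠ z ∧ ¬ G.Adj x z := by
    simpa [IsClusterOn] using hC
  obtain ⟨A, B, hA, hB, hABS, hAB | hAB⟩ := hG.exists_split ⟨x, hx, z, hz, hne⟩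
  · wlog hxA : x ∈ A generalizing A B with H
    · exact H B A hB hA (by rw [Set.union_comm, hABS]) hAB.symm
        ((hABS ▸ hx : x ∈ A ∪ B).resolve_left hxA)
    have hzA : z ∈ A := (hABS ▸ hz : z ∈ A ∪ B).resolve_right fun hzB ↦ hxz (hAB hxA hzB)
    have hAS : A ⊆ S := hABS ▸ Set.subset_union_left
    have hBS : B ⊆ S := hABS ▸ Set.subset_union_right
    by_cases hIB : G.IsIndepSet B
    · obtain ⟨b, hb⟩ := hB
      by_cases hCA : G.IsClusterOn A
      · obtain ⟨e₁, he₁, e₂, he₂, he⟩ := exists_adj_of_not_isIndepSet fun hIA ↦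
          hT (hABS ▸ hIA.cliqueFreeOn_three_union hIB)
        refine .inl (((containsIn_KG_one b).join
          ((hCA.containsIn_K2uK1 he₁ he₂ he hxA hzA hne hxz).of_iso (gUnionComm _ _))
          (hAB.symm.mono (Set.singleton_subset_iff.2 hb) subset_rfl)).mono ?_)
        exact Set.union_subset (Set.singleton_subset_iff.2 (hBS hb)) hAS
      · refine .inr (.inl (((not_isClusterOn_iff.1 hCA).join (containsIn_KG_one b)
          (hAB.mono subset_rfl (Set.singleton_subset_iff.2 hb))).mono ?_))
        exact Set.union_subset hAS (Set.singleton_subset_iff.2 (hBS hb))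
    · obtain ⟨b₁, hb₁, b₂, hb₂, hb⟩ := exists_adj_of_not_isIndepSet hIB
      refine .inr (.inl (((containsIn_pathGraph_three (hAB hxA hb₁) (hAB hzA hb₁).symm hxz
        hne).join (containsIn_KG_one b₂) ?_).mono ?_))
      · simp [IsCompleteBetween, hAB hxA hb₂, hb, hAB hzA hb₂]
      · simp [Set.insert_subset_iff, hAS hxA, hAS hzA, hBS hb₁, hBS hb₂]
  · have hK3 := not_cliqueFreeOn_three_iff.1 hT
    have hP3 := not_isClusterOn_iff.1 hC
    rw [← hABS] at hK3 hP3
    wlog hK3A : G.ContainsIn (KG 3) A generalizing A B with H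
    · exact H B A hB hA (by rw [Set.union_comm, hABS]) hAB.symm (by rwa [Set.union_comm])
        (by rwa [Set.union_comm]) ((hK3.elim_union connected_top hAB).resolve_left hK3A)
    have hAS : A ⊂ S := Set.ssubset_of_union_eq hB hAB.disjoint hABS
    rcases hP3.elim_union (pathGraph_connected 2) hAB with hP3A | hP3B
    · exact (ih A hAS (not_cliqueFreeOn_three_iff.2 hK3A) (not_isClusterOn_iff.2 hP3A)).imp
        (·.mono hAS.le) (Or.imp (·.mono hAS.le) (·.mono hAS.le))
    · rw [← hABS, Set.union_comm]
      exact .inr (.inr (hP3B.union hK3A hAB.symm))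

theorem _root_.IsCograph.containsIn_of_isMonopolarOn (hG : IsCograph G)
    (hM : G.IsMonopolarOn S) (hK : ¬ G.SplitsCliqueTriangleFree S) (hC : ¬ G.IsClusterOn S) :
    G.ContainsIn (gUnion (pathGraph 3) twoK3) S ∨
      G.ContainsIn (gUnion (KG 3) (gJoin (pathGraph 3) (KG 1))) S ∨
      G.ContainsIn (gUnion (KG 3) paw) S ∨ G.ContainsIn (gJoin (KG 1) twoK3) S ∨
      G.ContainsIn (gJoin (EG 2) twoK2) S := by
  induction S using WellFoundedLT.induction with | _ S ih => ?_
  have hT : ¬ G.CliqueFreeOn S 3 := fun h ↦ hK h.splitsCliqueTriangleFree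
  obtain ⟨f, hf⟩ := not_cliqueFreeOn_three_iff.1 hT
  obtain ⟨A, B, hA, hB, hABS, hAB | hAB⟩ :=
    hG.exists_split ⟨f 0, hf 0, f 1, hf 1, f.injective.ne (by decide)⟩
  · -- The cluster part `S \ I` of a monopolar partition is not a clique, so it lies in one
    -- side `B` of the join; then `A ⊆ I`.
    obtain ⟨I, hIS, hI, hCl⟩ := hM
    have hnc : ¬ G.IsClique (S \ I) := fun hc ↦ hK ⟨S \ I, Set.sdiff_subset, hc,
      by rw [Set.sdiff_sdiff_cancel_left hIS]; exact hI.cliqueFreeOn_three⟩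
    wlog hCB : S \ I ⊆ B generalizing A B with H
    · exact H B A hB hA (by rw [Set.union_comm, hABS]) hAB.symm
        ((hCl.subset_or_subset (hABS ▸ Set.sdiff_subset) hAB hnc).resolve_right hCB)
    have hAS : A ⊆ S := hABS ▸ Set.subset_union_left
    obtain ⟨a, ha⟩ := hA
    have hAI : A ⊆ I := fun x hx ↦
      by_contra fun hxI ↦ hAB.disjoint.notMem_of_mem_left hx (hCB ⟨hAS hx, hxI⟩)
    have hIA : G.IsIndepSet A := hI.mono hAI
    have hCB' : G.IsClusterOn B := hCl.mono fun b hb ↦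
      ⟨hABS ▸ .inr hb, fun hbI ↦ hI (hAI ha) hbI (hAB ha hb).ne (hAB ha hb)⟩
    by_cases hAnt : A.Nontrivial
    · obtain ⟨x, hx, x', hx', hne⟩ := hAnt
      have hxA : {x, x'} ⊆ A := Set.insert_subset_iff.2 ⟨hx, Set.singleton_subset_iff.2 hx'⟩
      have hsB : ¬ G.IsSplitOn B := fun h ↦
        hK (hABS ▸ hIA.isSplitOn.splitsCliqueTriangleFree_union h hAB)
      refine .inr (.inr (.inr (.inr (hABS ▸ ((containsIn_EG_two hne (hIA hx hx' hne)).join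
        (hCB'.containsIn_twoK2 hsB) (hAB.mono hxA subset_rfl)).mono
        (Set.union_subset_union_left B hxA)))))
    · obtain rfl := (Set.not_nontrivial_iff.1 hAnt).eq_singleton_of_mem ha
      have hKB : ¬ G.SplitsCliqueTriangleFree B := fun h ↦
        hK (hABS ▸ Set.union_comm B {a} ▸ h.union_isClique (isClique_singleton a) hAB.symm)
      exact .inr (.inr (.inr (.inl (hABS ▸ (containsIn_KG_one a).join
        (hCB'.containsIn_twoK3 hKB) hAB))))
  · have hK3 := not_cliqueFreeOn_three_iff.1 hT
    have hP3 := not_isClusterOn_iff.1 hC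
    rw [← hABS] at hK3 hP3
    wlog hK3A : G.ContainsIn (KG 3) A generalizing A B with H
    · exact H B A hB hA (by rw [Set.union_comm, hABS]) hAB.symm (by rwa [Set.union_comm])
        (by rwa [Set.union_comm]) ((hK3.elim_union connected_top hAB).resolve_left hK3A)
    have hAS : A ⊂ S := Set.ssubset_of_union_eq hB hAB.disjoint hABS
    by_cases hTB : G.CliqueFreeOn B 3
    · have hKA : ¬ G.SplitsCliqueTriangleFree A := fun h ↦
        hK (hABS ▸ h.union_cliqueFreeOn hTB hAB)
      by_cases hCA : G.IsClusterOn A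
      · have hP3B := (hP3.elim_union (pathGraph_connected 2) hAB).resolve_left
          fun h ↦ not_isClusterOn_iff.2 h hCA
        rw [← hABS, Set.union_comm]
        exact .inl (hP3B.union (hCA.containsIn_twoK3 hKA) hAB.symm)
      · exact (ih A hAS (hM.mono hAS.le) hKA hCA).imp (·.mono hAS.le) <| .imp (·.mono hAS.le) <|
          .imp (·.mono hAS.le) <| .imp (·.mono hAS.le) (·.mono hAS.le)
    · have hK3B := not_cliqueFreeOn_three_iff.1 hTB
      refine hABS ▸ Or.imp_right (Or.imp_right .inl) ?_
      rcases hP3.elim_union (pathGraph_connected 2) hAB with hP3A | hP3B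
      · rw [Set.union_comm]
        exact containsIn_union_of_KG_three hK3B hAB.symm (hG.containsIn_of_not_cliqueFreeOn
          (not_cliqueFreeOn_three_iff.2 hK3A) (not_isClusterOn_iff.2 hP3A))
      · exact containsIn_union_of_KG_three hK3A hAB (hG.containsIn_of_not_cliqueFreeOn
          (not_cliqueFreeOn_three_iff.2 hK3B) (not_isClusterOn_iff.2 hP3B))

end Cograph

/-! ### Assembling the forbidden graphs -/

section Assembly

variable {G : SimpleGraph α} {D P Q T W X Y : Set α} {u v y₁ y₂ : α}

lemma contains_H1 (hX : G.ContainsIn (gJoin (EG 2) (EG 2)) X) (hy : y₁ ≠ y₂)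
    (hny : ¬ G.Adj y₁ y₂) (hvy₁ : G.Adj v y₁) (hvy₂ : G.Adj v y₂)
    (hyX : G.IsCompleteBetween {y₁, v, y₂} X) : Contains G H1 := by
  simp only [isCompleteBetween_insert_left, isCompleteBetween_singleton_left] at hyX
  refine ((containsIn_EG_two hy hny).join ((hX.join (containsIn_KG_one v) ?_).of_iso
    (gJoinAssoc _ _ _).symm) ?_).contains
  · exact fun x hx _ hv ↦ hv ▸ (hyX.2.1 x hx).symm
  · simp only [isCompleteBetween_union_right, isCompleteBetween_insert_left,
      isCompleteBetween_singleton_left, Set.mem_singleton_iff, forall_eq]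
    exact ⟨⟨hyX.1, hyX.2.2⟩, hvy₁.symm, hvy₂.symm⟩

lemma contains_H5 (hX : G.ContainsIn K2uK1 X) (hY : G.ContainsIn twoK2 Y)
    (hXY : G.IsCompleteBetween X Y) (hvX : ∀ x ∈ X, G.Adj v x) (hvY : ∀ y ∈ Y, G.Adj v y) :
    Contains G H5 :=
  (hX.join ((containsIn_KG_one v).join hY (isCompleteBetween_singleton_left.2 hvY))
    (isCompleteBetween_union_right.2 ⟨fun x hx _ hv ↦ hv ▸ (hvX x hx).symm, hXY⟩)).contains

variable [Finite α]

lemma contains_of_apex_path (hG : IsCograph G) (hy : y₁ ≠ y₂) (hny : ¬ G.Adj y₁ y₂)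
    (hvy₁ : G.Adj v y₁) (hvy₂ : G.Adj v y₂) (hyX : G.IsCompleteBetween {y₁, v, y₂} X)
    (hsX : ¬ G.IsSplitOn X) (hCX : ¬ G.IsClusterOn X) :
    Contains G H1 ∨ Contains G H2 ∨ Contains G H4 := by
  have hP3 := containsIn_pathGraph_three hvy₁.symm hvy₂ hny hy
  rcases hG.containsIn_of_not_isSplitOn hsX hCX with h | h | h
  · exact .inl (contains_H1 h hy hny hvy₁ hvy₂ hyX)
  · exact .inr (.inr (hP3.join h hyX).contains)
  · exact .inr (.inl (hP3.join h hyX).contains)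

lemma contains_of_apex_edge (hG : IsCograph G) (hvu : G.Adj v u)
    (hvD : ∀ d ∈ D, G.Adj v d) (huD : ∀ d ∈ D, G.Adj u d) (hM : G.IsMonopolarOn D)
    (hK : ¬ G.SplitsCliqueTriangleFree D) (hC : ¬ G.IsClusterOn D) :
    Contains G H13 ∨ Contains G H14 ∨ Contains G H15 ∨ Contains G H17 ∨ Contains G H2 := by
  have hvuD : G.IsCompleteBetween {v, u} D :=
    isCompleteBetween_insert_left.2 ⟨hvD, isCompleteBetween_singleton_left.2 huD⟩
  rcases hG.containsIn_of_isMonopolarOn hM hK hC with h | h | h | h | h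
  · exact .inl ((containsIn_KG_two hvu).join h hvuD).contains
  · exact .inr (.inl ((containsIn_KG_two hvu).join h hvuD).contains)
  · exact .inr (.inr (.inl ((containsIn_KG_two hvu).join h hvuD).contains))
  · obtain ⟨A, hAD, B, hBD, ⟨f, hf⟩, hB, hAB⟩ := h.exists_of_gJoin
    have ha := hAD (hf 0)
    refine .inr (.inr (.inr (.inl ((containsIn_KG_three hvu (hvD _ ha) (huD _ ha)).join hB
      ?_).contains)))
    simp only [isCompleteBetween_insert_left, isCompleteBetween_singleton_left]
    exact ⟨fun b hb ↦ hvD b (hBD hb), fun b hb ↦ huD b (hBD hb), fun b hb ↦ hAB (hf 0) hb⟩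
  · obtain ⟨A, hAD, B, hBD, hA, hB, hAB⟩ := h.exists_of_gJoin
    obtain ⟨x, hx, x', hx', hxx', hnxx'⟩ := hA.exists_of_EG_two
    refine .inr (.inr (.inr (.inr ((containsIn_pathGraph_three (hvD x (hAD hx)).symm
      (hvD x' (hAD hx')) hnxx' hxx').join ((containsIn_KG_one u).join hB ?_) ?_).contains)))
    · exact isCompleteBetween_singleton_left.2 fun b hb ↦ huD b (hBD hb)
    · simp only [isCompleteBetween_union_right, isCompleteBetween_insert_left,
        isCompleteBetween_singleton_left, Set.mem_singleton_iff, forall_eq]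
      exact ⟨⟨(huD x (hAD hx)).symm, hvu, (huD x' (hAD hx')).symm⟩,
        fun b hb ↦ hAB hx hb, fun b hb ↦ hvD b (hBD hb), fun b hb ↦ hAB hx' hb⟩

theorem contains_of_universal (hG : IsCograph G) (hvW : ∀ w ∈ W, G.Adj v w) (hu : u ∈ W)
    (huW : ∀ w ∈ W, w ≠ u → G.Adj u w) (hTW : T ⊆ W) (hT : G.CliqueFreeOn T 3)
    (hC : G.IsClusterOn (W \ T)) (hK : ¬ G.SplitsCliqueTriangleFree W)
    (hM : ¬ G.IsMonopolarOn W) :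
    Contains G H13 ∨ Contains G H14 ∨ Contains G H15 ∨ Contains G H17 ∨ Contains G H2 := by
  have huT : u ∈ T := by
    by_contra huT
    refine hK ⟨W \ T, Set.sdiff_subset, fun x hx y hy hxy ↦ ?_,
      by rwa [Set.sdiff_sdiff_cancel_left hTW]⟩
    by_cases hxu : x = u
    · exact hxu ▸ huW y hy.1 (hxu ▸ hxy).symm
    by_cases hyu : y = u
    · exact hyu ▸ (huW x hx.1 (hyu ▸ hxy)).symm
    exact hC hx ⟨hu, huT⟩ hy (huW x hx.1 hxu).symm (huW y hy.1 hyu) hxy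
  have hWD : W = {u} ∪ W \ {u} := by
    rw [Set.singleton_union, Set.insert_sdiff_singleton, Set.insert_eq_of_mem hu]
  have huD : ∀ d ∈ W \ {u}, G.Adj u d := fun d hd ↦ huW d hd.1 hd.2
  refine contains_of_apex_edge hG (hvW u hu) (fun d hd ↦ hvW d hd.1) huD ?_ ?_ ?_
  · refine ⟨(W \ {u}) ∩ T, Set.inter_subset_left, fun x hx y hy _ hxy ↦ ?_,
      hC.mono fun x hx ↦ ⟨hx.1.1, fun hxT ↦ hx.2 ⟨hx.1, hxT⟩⟩⟩
    exact cliqueFreeOn_three_iff.1 hT huT hx.2 hy.2 (huD x hx.1) (huD y hy.1) hxy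
  · exact fun h ↦ hK (hWD ▸ Set.union_comm (W \ {u}) {u} ▸
      h.union_isClique (isClique_singleton u) fun d hd _ hu ↦ hu ▸ (huD d hd).symm)
  · exact fun h ↦ hM (hWD ▸ isMonopolarOn_union (Set.pairwise_singleton _ _) h)

theorem contains_of_isCompleteBetween (hG : IsCograph G) (hPQ : G.IsCompleteBetween P Q)
    (hP : P.Nonempty) (hQ : Q.Nonempty) (hvW : ∀ w ∈ P ∪ Q, G.Adj v w)
    (hnu : ∀ u ∈ P ∪ Q, ∃ w ∈ P ∪ Q, w ≠ u ∧ ¬ G.Adj u w) (hT : G.CliqueFreeOn T 3)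
    (hCP : (P ∪ Q) \ T ⊆ P) (hC : G.IsClusterOn ((P ∪ Q) \ T))
    (hK : ¬ G.SplitsCliqueTriangleFree (P ∪ Q)) (hM : ¬ G.IsMonopolarOn (P ∪ Q)) :
    Contains G H1 ∨ Contains G H2 ∨ Contains G H4 ∨ Contains G H5 := by
  have hvP p (hp : p ∈ P) : G.Adj v p := hvW p (.inl hp)
  have hvQ q (hq : q ∈ Q) : G.Adj v q := hvW q (.inr hq)
  have hQT : Q ⊆ T := fun q hq ↦ by_contra fun hqT ↦
    hPQ.disjoint.notMem_of_mem_right hq (hCP ⟨.inr hq, hqT⟩)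
  have hnQ : ∀ q ∈ Q, ∃ q' ∈ Q, q' ≠ q ∧ ¬ G.Adj q q' := fun q hq ↦
    let ⟨x, hx, hxq, hqx⟩ := hnu q (.inr hq)
    ⟨x, hx.resolve_left fun hxP ↦ hqx (hPQ hxP hq).symm, hxq, hqx⟩
  obtain ⟨p₀, hp₀⟩ := hP
  obtain ⟨p₁, hp₁, hp₁₀, hnp⟩ := hnu p₀ (.inl hp₀)
  replace hp₁ : p₁ ∈ P := hp₁.resolve_right fun hp₁Q ↦ hnp (hPQ hp₀ hp₁Q)
  obtain ⟨q₀, hq₀⟩ := hQ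
  obtain ⟨q₁, hq₁, hq₁₀, hnq⟩ := hnQ q₀ hq₀
  have hpQ : G.IsCompleteBetween {p₀, v, p₁} Q := isCompleteBetween_insert_left.2
    ⟨fun _ hq ↦ hPQ hp₀ hq, isCompleteBetween_insert_left.2
      ⟨hvQ, isCompleteBetween_singleton_left.2 fun _ hq ↦ hPQ hp₁ hq⟩⟩
  have hqP : G.IsCompleteBetween {q₀, v, q₁} P := isCompleteBetween_insert_left.2
    ⟨fun _ hp ↦ (hPQ hp hq₀).symm, isCompleteBetween_insert_left.2
      ⟨hvP, isCompleteBetween_singleton_left.2 fun _ hp ↦ (hPQ hp hq₁).symm⟩⟩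
  by_cases hIQ : G.IsIndepSet Q
  · have := contains_of_apex_path hG hq₁₀.symm hnq (hvQ _ hq₀) (hvQ _ hq₁) hqP
      (fun h ↦ hK (h.splitsCliqueTriangleFree_union hIQ.isSplitOn hPQ))
      (fun h ↦ hM (Set.union_comm Q P ▸ isMonopolarOn_union hIQ h))
    tauto
  -- An edge of `Q ⊆ T` forms a triangle with every vertex of `P ∩ T`, so `P` lies in the cluster.
  obtain ⟨e₁, he₁, e₂, he₂, he⟩ := exists_adj_of_not_isIndepSet hIQ
  have hCP' : G.IsClusterOn P := hC.mono fun p hp ↦ ⟨.inl hp, fun hpT ↦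
    cliqueFreeOn_three_iff.1 hT hpT (hQT he₁) (hQT he₂) (hPQ hp he₁) (hPQ hp he₂) he⟩
  by_cases hsQ : G.IsSplitOn Q
  · have h2K2 := hCP'.containsIn_twoK2 fun h ↦ hK (h.splitsCliqueTriangleFree_union hsQ hPQ)
    rcases containsIn_K2uK1_or_C4 he₁ he₂ he hnQ with h | h
    · exact .inr (.inr (.inr (contains_H5 h h2K2 hPQ.symm hvQ hvP)))
    · exact .inl (contains_H1 h hp₁₀.symm hnp (hvP _ hp₀) (hvP _ hp₁) hpQ)
  by_cases hCQ : G.IsClusterOn Q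
  · obtain ⟨f₁, hf₁, f₂, hf₂, hf⟩ :=
      exists_adj_of_not_isIndepSet fun hIP ↦ hM (isMonopolarOn_union hIP hCQ)
    exact .inr (.inr (.inr (contains_H5
      (hCP'.containsIn_K2uK1 hf₁ hf₂ hf hp₀ hp₁ hp₁₀.symm hnp)
      (hCQ.containsIn_twoK2 hsQ) hPQ hvP hvQ)))
  · have := contains_of_apex_path hG hp₁₀.symm hnp (hvP _ hp₀) (hvP _ hp₁) hpQ hsQ hCQ
    tauto

theorem contains_of_not_exists_universal (hG : IsCograph G) (hW : (G.induce W).Connected)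
    (hvW : ∀ w ∈ W, G.Adj v w) (hnu : ∀ u ∈ W, ∃ w ∈ W, w ≠ u ∧ ¬ G.Adj u w)
    (hTW : T ⊆ W) (hT : G.CliqueFreeOn T 3) (hC : G.IsClusterOn (W \ T))
    (hK : ¬ G.SplitsCliqueTriangleFree W) (hM : ¬ G.IsMonopolarOn W) :
    Contains G H1 ∨ Contains G H2 ∨ Contains G H4 ∨ Contains G H5 := by
  obtain ⟨w, hw⟩ := hW.nonempty
  obtain ⟨w', hw', hw'w, -⟩ := hnu w hw
  obtain ⟨P, Q, hP, hQ, rfl, hPQ⟩ := hG.exists_isCompleteBetween hW ⟨w', hw', w, hw, hw'w⟩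
  rcases hC.subset_or_subset Set.sdiff_subset hPQ fun hc ↦
    hK ⟨_, Set.sdiff_subset, hc, by rwa [Set.sdiff_sdiff_cancel_left hTW]⟩ with hCP | hCQ
  · exact contains_of_isCompleteBetween hG hPQ hP hQ hvW hnu hT hCP hC hK hM
  · rw [Set.union_comm] at hvW hnu hCQ hC hK hM
    exact contains_of_isCompleteBetween hG hPQ.symm hQ hP hvW hnu hT hCQ hC hK hM

end Assembly

end SimpleGraph

section Partitionable

variable {α : Type*} {G : SimpleGraph α} {S : Set α} {v : α}

lemma partitionable_iff :
    Partitionable G ↔ ∃ T, G.CliqueFreeOn T 3 ∧ G.IsClusterOn Tᶜ := by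
  simp only [_root_.Partitionable, cliqueFree_induce_iff, ← containsIn_iff_contains_induce,
    ← not_isClusterOn_iff, not_not]

lemma Partitionable.exists_of_induce (h : Partitionable (G.induce S)) :
    ∃ T ⊆ S, G.CliqueFreeOn T 3 ∧ G.IsClusterOn (S \ T) := by
  obtain ⟨T, hT, hC⟩ := partitionable_iff.1 h
  refine ⟨Subtype.val '' T, Subtype.coe_image_subset S T, ?_, ?_⟩
  · rw [cliqueFreeOn_three_iff] at hT ⊢
    rintro _ ⟨a, ha, rfl⟩ _ ⟨b, hb, rfl⟩ _ ⟨c, hc, rfl⟩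
    exact hT ha hb hc
  · rw [← Set.image_val_compl]
    rintro _ ⟨x, hx, rfl⟩ _ ⟨y, hy, rfl⟩ _ ⟨z, hz, rfl⟩ hxy hyz hne
    exact hC hx hy hz hxy hyz fun h ↦ hne (congrArg Subtype.val h)

lemma partitionable_of_splitsCliqueTriangleFree (hv : ∀ w, w ≠ v → G.Adj v w)
    (h : G.SplitsCliqueTriangleFree {v}ᶜ) : Partitionable G := by
  obtain ⟨K, hK, hKc, hT⟩ := h
  refine partitionable_iff.2 ⟨_, hT, IsClique.isClusterOn
    ((isClique_insert.2 ⟨hKc, fun b hb _ ↦ hv b (hK hb)⟩).subset fun x hx ↦ ?_)⟩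
  by_cases hxv : x = v
  · exact .inl hxv
  · exact .inr (by_contra fun hxK ↦ hx ⟨hxv, hxK⟩)

lemma partitionable_of_isMonopolarOn (h : G.IsMonopolarOn {v}ᶜ) : Partitionable G := by
  obtain ⟨I, -, hI, hC⟩ := h
  refine partitionable_iff.2 ⟨{v} ∪ I,
    IsIndepSet.cliqueFreeOn_three_union (Set.pairwise_singleton _ _) hI, hC.mono fun x hx ↦ ?_⟩
  simp only [Set.mem_compl_iff, Set.mem_union, Set.mem_singleton_iff, not_or] at hx
  exact ⟨hx.1, hx.2⟩

end Partitionable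

theorem stmt_18 {α : Type*} [Fintype α] (G : SimpleGraph α) (hcog : IsCograph G)
    (hnp : ¬ Partitionable G)
    (hmin : ∀ A : Set α, A ≠ Set.univ → Partitionable (G.induce A))
    (v : α) (hv : ∀ w, w ≠ v → G.Adj v w)
    (hconn : (G.induce ({v}ᶜ : Set α)).Connected) :
    Contains G H1 ∨ Contains G H2 ∨ Contains G H4 ∨ Contains G H5 ∨
      Contains G H13 ∨ Contains G H14 ∨ Contains G H15 ∨ Contains G H17 := by
  obtain ⟨T, hTW, hT, hC⟩ :=
    (hmin {v}ᶜ fun h ↦ (h ▸ Set.mem_univ v : v ∈ ({v}ᶜ : Set α)) rfl).exists_of_induce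
  have hK : ¬ G.SplitsCliqueTriangleFree {v}ᶜ :=
    fun h ↦ hnp (partitionable_of_splitsCliqueTriangleFree hv h)
  have hM : ¬ G.IsMonopolarOn {v}ᶜ := fun h ↦ hnp (partitionable_of_isMonopolarOn h)
  by_cases hu : ∃ u ∈ ({v}ᶜ : Set α), ∀ w ∈ ({v}ᶜ : Set α), w ≠ u → G.Adj u w
  · obtain ⟨u, hu, huW⟩ := hu
    have := contains_of_universal hcog hv hu huW hTW hT hC hK hM
    tauto
  · push Not at hu
    have := contains_of_not_exists_universal hcog hconn hv hu hTW hT hC hK hM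
    tauto
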